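/- Let α > 0 be a real number. For n > 1 let p(n) denote the smallest prime divisor of n, P(n) the largest prime divisor of n, and μ the Möbius function. Then for every constant A > 0, Σ_{1 < n ≤ x, μ(n) = 0} (p(n)/P(n))^α = O(x/(log x)^A) as x → ∞; that is, the contribution of non-squarefree integers is negligible to any power of log x. -/

import Mathlib

/-!
Put `T = ⌈(log x)^A⌉` and `S = ⌈(log x)^(A/α)⌉`. A non-squarefree `n ≤ x` either has `q² ∣ n`
for some `q > T`, which happens for at most `∑_{q > T} x / q² ≪ x / T` integers, or `p(n) ≤ q ≤ T`
for a prime `q` with `q² ∣ n`. In the second case, either `P(n) ≥ TS`, so that the term is at most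
`S^(-α) ≤ (log x)^(-A)`, or `n` is `y`-smooth with `y = TS ≤ (log x)^B` for a constant `B`.
Rankin's trick with exponent `σ = 1 - 1 / log y` bounds the number of `y`-smooth integers up to
`x` by `x^σ ∏_{p < y} (1 - p^(-σ))⁻¹ ≤ x^σ y^24 = x exp (-log x / log y + 24 log y)`, which is
`O(x / (log x)^A)` because `log y = O(log log x)`.
-/

open Asymptotics Filter Finset Real

namespace Nat

lemma minFac_le_sup_primeFactors {n : ℕ} (hn : 1 < n) : n.minFac ≤ n.primeFactors.sup id :=
  le_sup (f := id) (mem_primeFactors.mpr ⟨minFac_prime hn.ne', minFac_dvd n, by omega⟩)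

lemma exists_sq_dvd_or_mem_smoothNumbers_or_minFac_mul_le {n : ℕ} (hn : ¬Squarefree n)
    (T S : ℕ) :
    (∃ q, T < q ∧ q ^ 2 ∣ n) ∨ n ∈ smoothNumbers (T * S) ∨
      n.minFac * S ≤ n.primeFactors.sup id := by
  rcases eq_or_ne n 0 with rfl | hn0
  · exact .inl ⟨T + 1, by omega, dvd_zero _⟩
  obtain ⟨q, hq, hqn⟩ : ∃ q, q.Prime ∧ q ^ 2 ∣ n := by
    simpa [squarefree_iff_prime_squarefree, sq] using hn
  by_cases hqT : T < q
  · exact .inl ⟨q, hqT, hqn⟩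
  by_cases hsmooth : n ∈ smoothNumbers (T * S)
  · exact .inr (.inl hsmooth)
  obtain ⟨p, hp, hpn, hTSp⟩ : ∃ p, p.Prime ∧ p ∣ n ∧ T * S ≤ p := by
    simpa [mem_smoothNumbers'] using hsmooth
  have hminFac : n.minFac ≤ T :=
    (minFac_le_of_dvd hq.two_le ((dvd_pow_self q two_ne_zero).trans hqn)).trans (by omega)
  have hp_le : p ≤ n.primeFactors.sup id :=
    le_sup (f := id) (mem_primeFactors.mpr ⟨hp, hpn, hn0⟩)
  exact .inr (.inr (by nlinarith [Nat.mul_le_mul_right S hminFac]))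

end Nat

lemma card_filter_exists_sq_dvd_le (N T : ℕ) :
    (#{n ∈ Ioc 0 N | ∃ q ∈ Ioc T N, q ^ 2 ∣ n} : ℝ) ≤ 2 * N / (T + 1) := by
  have hsub : {n ∈ Ioc 0 N | ∃ q ∈ Ioc T N, q ^ 2 ∣ n} ⊆
      (Ioc T N).biUnion fun q => {n ∈ Ioc 0 N | q ^ 2 ∣ n} := by
    intro n hn
    simp only [mem_filter] at hn
    obtain ⟨hn, q, hq, hqn⟩ := hn
    exact mem_biUnion.mpr ⟨q, hq, mem_filter.mpr ⟨hn, hqn⟩⟩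
  calc (#{n ∈ Ioc 0 N | ∃ q ∈ Ioc T N, q ^ 2 ∣ n} : ℝ)
      ≤ ∑ q ∈ Ioc T N, (#{n ∈ Ioc 0 N | q ^ 2 ∣ n} : ℝ) := by
        exact_mod_cast (card_le_card hsub).trans card_biUnion_le
    _ ≤ ∑ q ∈ Ioc T N, N * ((q : ℝ) ^ 2)⁻¹ := by
        gcongr with q
        rw [Nat.Ioc_filter_dvd_card_eq_div, ← div_eq_mul_inv]
        exact_mod_cast Nat.cast_div_le
    _ ≤ N * ∑ q ∈ Ioo T (N + 1), ((q : ℝ) ^ 2)⁻¹ := by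
        rw [← mul_sum]
        gcongr
        intro q hq
        simp only [mem_Ioc, mem_Ioo] at hq ⊢
        omega
    _ ≤ N * (2 / (T + 1)) := by gcongr; exact sum_Ioo_inv_sq_le T (N + 1)
    _ = 2 * N / (T + 1) := by ring

lemma minFac_div_sup_primeFactors_rpow_le {α : ℝ} (hα : 0 ≤ α) {N T S n : ℕ} (hS : 0 < S)
    (hn : 1 < n) (hnN : n ≤ N) (hsf : ¬Squarefree n) :
    ((n.minFac : ℝ) / ((n.primeFactors.sup id : ℕ) : ℝ)) ^ α
      ≤ (if ∃ q ∈ Ioc T N, q ^ 2 ∣ n then 1 else 0)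
        + (if n ∈ Nat.smoothNumbers (T * S) then 1 else 0) + 1 / (S : ℝ) ^ α := by
  have hle_one : ((n.minFac : ℝ) / ((n.primeFactors.sup id : ℕ) : ℝ)) ^ α ≤ 1 :=
    rpow_le_one (by positivity) (div_le_one_of_le₀
      (by exact_mod_cast Nat.minFac_le_sup_primeFactors hn) (by positivity)) hα
  have hS_rpow : 0 ≤ 1 / (S : ℝ) ^ α := by positivity
  rcases Nat.exists_sq_dvd_or_mem_smoothNumbers_or_minFac_mul_le hsf T S with
    ⟨q, hTq, hqn⟩ | hsmooth | hminFac
  · have hqN : q ≤ N :=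
      (Nat.le_self_pow two_ne_zero q).trans ((Nat.le_of_dvd (by omega) hqn).trans hnN)
    rw [if_pos ⟨q, mem_Ioc.mpr ⟨hTq, hqN⟩, hqn⟩]
    split_ifs <;> linarith
  · rw [if_pos hsmooth]
    split_ifs <;> linarith
  · have hP : (0 : ℝ) < (n.primeFactors.sup id : ℕ) := by
      exact_mod_cast (Nat.minFac_pos n).trans_le (Nat.minFac_le_sup_primeFactors hn)
    have hratio : (n.minFac : ℝ) / ((n.primeFactors.sup id : ℕ) : ℝ) ≤ 1 / S := by
      rw [div_le_div_iff₀ hP (by positivity)]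
      exact_mod_cast (by linarith : n.minFac * S ≤ 1 * n.primeFactors.sup id)
    have hle : ((n.minFac : ℝ) / ((n.primeFactors.sup id : ℕ) : ℝ)) ^ α ≤ 1 / (S : ℝ) ^ α :=
      calc _ ≤ (1 / (S : ℝ)) ^ α := rpow_le_rpow (by positivity) hratio hα
        _ = 1 / (S : ℝ) ^ α := by rw [div_rpow zero_le_one (Nat.cast_nonneg _), one_rpow]
    split_ifs <;> linarith

lemma sum_nonsquarefree_ratio_rpow_le {α : ℝ} (hα : 0 ≤ α) (N T S : ℕ) (hS : 0 < S) :
    ∑ n ∈ {n ∈ Icc 2 N | ¬Squarefree n},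
        ((n.minFac : ℝ) / ((n.primeFactors.sup id : ℕ) : ℝ)) ^ α
      ≤ #{n ∈ Ioc 0 N | ∃ q ∈ Ioc T N, q ^ 2 ∣ n} + #(Nat.smoothNumbersUpTo N (T * S))
        + N / (S : ℝ) ^ α := by
  have hsmooth_sub : {n ∈ Ioc 0 N | n ∈ Nat.smoothNumbers (T * S)} ⊆
      Nat.smoothNumbersUpTo N (T * S) := fun n hn => by
    simp only [mem_filter, mem_Ioc] at hn
    exact Nat.mem_smoothNumbersUpTo.mpr ⟨hn.1.2, hn.2⟩
  calc _ ≤ ∑ n ∈ {n ∈ Icc 2 N | ¬Squarefree n}, ((if ∃ q ∈ Ioc T N, q ^ 2 ∣ n then 1 else 0)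
          + (if n ∈ Nat.smoothNumbers (T * S) then 1 else 0) + 1 / (S : ℝ) ^ α) := by
        refine sum_le_sum fun n hn => ?_
        simp only [mem_filter, mem_Icc] at hn
        exact minFac_div_sup_primeFactors_rpow_le hα hS hn.1.1 hn.1.2 hn.2
    _ ≤ ∑ n ∈ Ioc 0 N, ((if ∃ q ∈ Ioc T N, q ^ 2 ∣ n then 1 else 0)
          + (if n ∈ Nat.smoothNumbers (T * S) then 1 else 0) + 1 / (S : ℝ) ^ α) := by
        refine sum_le_sum_of_subset_of_nonneg (fun n hn => ?_) fun n _ _ => by positivity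
        simp only [mem_filter, mem_Icc, mem_Ioc] at hn ⊢
        omega
    _ ≤ _ := by
        simp only [sum_add_distrib, sum_boole, sum_const, Nat.card_Ioc]
        rw [nsmul_eq_mul, Nat.sub_zero, mul_one_div]
        gcongr

lemma card_smoothNumbersUpTo_le_rpow_mul_prod (N y : ℕ) {σ : ℝ} (hσ : 0 < σ) :
    (#(Nat.smoothNumbersUpTo N y) : ℝ)
      ≤ (N : ℝ) ^ σ * ∏ p ∈ y.primesBelow, (1 - (p : ℝ) ^ (-σ))⁻¹ := by
  set f : ℕ → ℝ := fun n => (n : ℝ) ^ (-σ)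
  have hpow : ∀ p k : ℕ, f (p ^ k) = ((p : ℝ) ^ (-σ)) ^ k := fun p k => by
    simp only [f, Nat.cast_pow, ← rpow_natCast, ← rpow_mul (Nat.cast_nonneg p), mul_comm]
  have hp_rpow : ∀ p : ℕ, p.Prime → 0 ≤ (p : ℝ) ^ (-σ) ∧ (p : ℝ) ^ (-σ) < 1 := fun p hp =>
    ⟨by positivity, rpow_lt_one_of_one_lt_of_neg (by exact_mod_cast hp.one_lt) (by linarith)⟩
  have hmul : ∀ {m n : ℕ}, m.Coprime n → f (m * n) = f m * f n := fun {m n} _ => by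
    simp only [f, Nat.cast_mul]
    exact mul_rpow (by positivity) (by positivity)
  have hEuler := (EulerProduct.summable_and_hasSum_smoothNumbers_prod_primesBelow_tsum
    (f := f) (by simp [f]) hmul
    (fun {p} hp => by
      simp only [hpow]
      exact (summable_geometric_of_lt_one (hp_rpow p hp).1 (hp_rpow p hp).2).abs) y).2
  rw [prod_congr rfl fun p hp => by
    obtain ⟨h0, h1⟩ := hp_rpow p (Nat.prime_of_mem_primesBelow hp)
    simp only [hpow]; exact tsum_geometric_of_lt_one h0 h1] at hEuler
  calc (#(Nat.smoothNumbersUpTo N y) : ℝ) = ∑ n ∈ Nat.smoothNumbersUpTo N y, 1 := by simp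
    _ ≤ ∑ n ∈ Nat.smoothNumbersUpTo N y, (N : ℝ) ^ σ * f n := by
        gcongr with n hn
        obtain ⟨hnN, hn⟩ := Nat.mem_smoothNumbersUpTo.mp hn
        have hn0 : (0 : ℝ) < n := by exact_mod_cast Nat.pos_of_ne_zero hn.1
        simp only [f]
        rw [rpow_neg hn0.le, ← div_eq_mul_inv, ← div_rpow (Nat.cast_nonneg _) hn0.le]
        exact one_le_rpow ((one_le_div hn0).mpr (by exact_mod_cast hnN)) hσ.le
    _ = (N : ℝ) ^ σ * ∑ n ∈ Nat.smoothNumbersUpTo N y, f n := by rw [mul_sum]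
    _ ≤ _ := by
        gcongr
        rw [Nat.smoothNumbersUpTo, ← sum_subtype_eq_sum_filter]
        exact sum_le_hasSum _ (fun n _ => by positivity) hEuler

lemma two_le_log_of_eight_le {y : ℝ} (hy : 8 ≤ y) : 2 ≤ log y := by
  rw [le_log_iff_exp_le (by positivity)]
  calc exp 2 = exp 1 ^ 2 := by rw [← exp_nat_mul]; norm_num
    _ ≤ 2.7182818286 ^ 2 := by gcongr; exact exp_one_lt_d9.le
    _ ≤ y := by norm_num; linarith

lemma inv_one_sub_le_exp {t : ℝ} (ht₀ : 0 ≤ t) (ht : t ≤ 3 / 4) : (1 - t)⁻¹ ≤ exp (4 * t) := by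
  calc (1 - t)⁻¹ ≤ 1 + 4 * t := by
        rw [inv_le_iff_one_le_mul₀ (by linarith)]
        nlinarith
    _ ≤ exp (4 * t) := by linarith [add_one_le_exp (4 * t)]

lemma rpow_neg_one_sub_inv_log_le {m y : ℝ} (hm : 0 < m) (hmy : m ≤ y) (hy : 1 < y) :
    m ^ (-(1 - 1 / log y)) ≤ 3 / m := by
  have hlog : 0 < log y := log_pos hy
  calc m ^ (-(1 - 1 / log y)) = m⁻¹ * m ^ (1 / log y) := by
        rw [neg_sub, sub_eq_neg_add, rpow_add hm, rpow_neg_one]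
    _ ≤ m⁻¹ * y ^ (1 / log y) := by gcongr
    _ = m⁻¹ * exp 1 := by
        rw [rpow_def_of_pos (hm.trans_le hmy), mul_one_div_cancel hlog.ne']
    _ ≤ 3 / m := by
        rw [inv_mul_eq_div]
        gcongr
        linarith [exp_one_lt_d9]

lemma sum_Icc_inv_le_one_add_log (n : ℕ) : ∑ m ∈ Icc 1 n, (m : ℝ)⁻¹ ≤ 1 + log n := by
  simpa [harmonic_eq_sum_Icc] using harmonic_le_one_add_log n

lemma rpow_neg_le_three_quarters {p σ : ℝ} (hp : 2 ≤ p) (hσ : 1 / 2 ≤ σ) :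
    p ^ (-σ) ≤ 3 / 4 := by
  have hsqrt : 4 / 3 ≤ p ^ σ := calc
    (4 / 3 : ℝ) ≤ √2 := le_sqrt_of_sq_le (by norm_num)
    _ ≤ p ^ (1 / 2 : ℝ) := by rw [← sqrt_eq_rpow]; gcongr
    _ ≤ p ^ σ := rpow_le_rpow_of_exponent_le (by linarith) hσ
  rw [rpow_neg (by positivity)]
  calc (p ^ σ)⁻¹ ≤ (4 / 3)⁻¹ := by gcongr
    _ = 3 / 4 := by norm_num

lemma sum_primesBelow_rpow_neg_one_sub_inv_log_le {y : ℕ} (hy : 1 < y) :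
    ∑ p ∈ y.primesBelow, (p : ℝ) ^ (-(1 - 1 / log y)) ≤ 3 * (1 + log y) := by
  calc ∑ p ∈ y.primesBelow, (p : ℝ) ^ (-(1 - 1 / log y))
      ≤ ∑ m ∈ Icc 1 y, (m : ℝ) ^ (-(1 - 1 / log y)) := by
        refine sum_le_sum_of_subset_of_nonneg (fun p hp => ?_) fun m _ _ => by positivity
        exact mem_Icc.mpr ⟨(Nat.prime_of_mem_primesBelow hp).one_le,
          (Nat.lt_of_mem_primesBelow hp).le⟩
    _ ≤ ∑ m ∈ Icc 1 y, 3 * (m : ℝ)⁻¹ := by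
        gcongr with m hm
        obtain ⟨h1m, hmy⟩ := mem_Icc.mp hm
        rw [← div_eq_mul_inv]
        exact rpow_neg_one_sub_inv_log_le (by exact_mod_cast h1m) (by exact_mod_cast hmy)
          (by exact_mod_cast hy)
    _ ≤ 3 * (1 + log y) := by
        rw [← mul_sum]
        gcongr
        exact sum_Icc_inv_le_one_add_log y

lemma prod_primesBelow_inv_one_sub_rpow_le {y : ℕ} (hy : 8 ≤ y) :
    ∏ p ∈ y.primesBelow, (1 - (p : ℝ) ^ (-(1 - 1 / log y)))⁻¹ ≤ (y : ℝ) ^ 24 := by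
  have hlog : 2 ≤ log y := two_le_log_of_eight_le (by exact_mod_cast hy)
  have hσ : 1 / 2 ≤ 1 - 1 / log y := by
    have : 1 / log y ≤ 1 / 2 := by gcongr
    linarith
  have hp_rpow : ∀ p ∈ y.primesBelow, (p : ℝ) ^ (-(1 - 1 / log y)) ≤ 3 / 4 := fun p hp =>
    rpow_neg_le_three_quarters (by exact_mod_cast (Nat.prime_of_mem_primesBelow hp).two_le) hσ
  calc ∏ p ∈ y.primesBelow, (1 - (p : ℝ) ^ (-(1 - 1 / log y)))⁻¹
      ≤ ∏ p ∈ y.primesBelow, exp (4 * (p : ℝ) ^ (-(1 - 1 / log y))) := by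
        refine prod_le_prod (fun p hp => ?_) (fun p hp => ?_)
        · exact inv_nonneg.mpr (by linarith [hp_rpow p hp])
        · exact inv_one_sub_le_exp (by positivity) (hp_rpow p hp)
    _ = exp (4 * ∑ p ∈ y.primesBelow, (p : ℝ) ^ (-(1 - 1 / log y))) := by
        rw [← exp_sum, mul_sum]
    _ ≤ exp (24 * log y) := by
        rw [exp_le_exp]
        linarith [sum_primesBelow_rpow_neg_one_sub_inv_log_le (by omega : 1 < y)]
    _ = (y : ℝ) ^ 24 := by
        rw [show (24 : ℝ) = (24 : ℕ) by norm_num, exp_nat_mul, exp_log (by positivity)]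

lemma card_smoothNumbersUpTo_le {y : ℕ} (hy : 8 ≤ y) (N : ℕ) :
    (#(Nat.smoothNumbersUpTo N y) : ℝ) ≤ (N : ℝ) ^ (1 - 1 / log y) * (y : ℝ) ^ 24 := by
  have hσ : 0 < 1 - 1 / log y := by
    have : 1 / log y ≤ 1 / 2 := by gcongr; exact two_le_log_of_eight_le (by exact_mod_cast hy)
    linarith
  exact (card_smoothNumbersUpTo_le_rpow_mul_prod N y hσ).trans
    (mul_le_mul_of_nonneg_left (prod_primesBelow_inv_one_sub_rpow_le hy) (by positivity))

lemma rpow_one_sub_inv_log_mul_pow_le {x y A B : ℝ} (hx : 0 < x) (hy : 1 < y) (hA : 0 ≤ A)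
    (hB : 0 ≤ B) (hyB : log y ≤ B * log (log x))
    (hbig : B * (A + 24 * B) * log (log x) ^ 2 ≤ log x) :
    x ^ (1 - 1 / log y) * y ^ 24 ≤ x / log x ^ A := by
  set L := log x
  have hu : 0 < log y := log_pos hy
  have hℓ : 0 < log L := pos_of_mul_pos_right (hu.trans_le hyB) hB
  have hL : 0 < L := lt_of_le_of_ne (hbig.trans' (by positivity)) fun h => by
    simp [← h] at hℓ
  have key : 24 * log y + A * log L ≤ L / log y := by
    rw [le_div_iff₀ hu]
    nlinarith [mul_le_mul_of_nonneg_left hyB (by positivity : 0 ≤ 24 * log y + A * log L)]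
  calc x ^ (1 - 1 / log y) * y ^ 24 = exp (L * (1 - 1 / log y) + 24 * log y) := by
        rw [exp_add, ← rpow_def_of_pos hx, ← exp_log (by linarith : 0 < y), ← exp_nat_mul]
        norm_num
    _ ≤ exp (L - A * log L) := by
        gcongr
        rw [mul_sub, mul_one, mul_one_div]
        linarith
    _ = x / L ^ A := by
        rw [exp_sub, exp_log hx, rpow_def_of_pos hL, mul_comm]

lemma eventually_mul_log_log_sq_le_log (K : ℝ) : ∀ᶠ x in atTop, K * log (log x) ^ 2 ≤ log x := by
  refine tendsto_log_atTop.eventually (p := fun L => K * log L ^ 2 ≤ L) ?_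
  filter_upwards [((isLittleO_pow_log_id_atTop (n := 2)).const_mul_left K).bound one_pos,
    eventually_ge_atTop 0] with L hL hL0
  calc K * log L ^ 2 ≤ ‖K * log L ^ 2‖ := le_norm_self _
    _ ≤ 1 * ‖L‖ := by simpa only [id] using hL
    _ = L := by rw [one_mul, norm_of_nonneg hL0]

lemma isBigO_card_smoothNumbersUpTo {A : ℝ} (hA : 0 ≤ A) {B : ℝ} {y : ℝ → ℕ}
    (hy : ∀ᶠ x in atTop, (y x : ℝ) ≤ log x ^ B) :
    (fun x => (#(Nat.smoothNumbersUpTo ⌊x⌋₊ (y x)) : ℝ)) =O[atTop] fun x => x / log x ^ A := by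
  set B' := max B 1
  refine .of_norm_eventuallyLE ?_
  filter_upwards [hy, eventually_mul_log_log_sq_le_log (B' * (A + 24 * B')),
    tendsto_log_atTop.eventually_ge_atTop 8,
    eventually_gt_atTop 0] with x hyx hbigx hL hx
  set y' := max (y x) 8
  have hy' : (y' : ℝ) ≤ log x ^ B' := by
    push_cast [y']
    refine max_le (hyx.trans (rpow_le_rpow_of_exponent_le (by linarith) (le_max_left _ _))) ?_
    calc (8 : ℝ) ≤ log x := hL
      _ ≤ log x ^ B' := by
        conv_lhs => rw [← rpow_one (log x)]
        exact rpow_le_rpow_of_exponent_le (by linarith) (le_max_right _ _)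
  have hmono : Nat.smoothNumbersUpTo ⌊x⌋₊ (y x) ⊆ Nat.smoothNumbersUpTo ⌊x⌋₊ y' := fun n hn => by
    rw [Nat.mem_smoothNumbersUpTo] at hn ⊢
    exact ⟨hn.1, Nat.smoothNumbers_mono (le_max_left _ _) hn.2⟩
  have hy'1 : (1 : ℝ) < y' := by exact_mod_cast (by omega : 1 < y')
  calc ‖(#(Nat.smoothNumbersUpTo ⌊x⌋₊ (y x)) : ℝ)‖ ≤ #(Nat.smoothNumbersUpTo ⌊x⌋₊ y') := by
        rw [Real.norm_natCast]; exact_mod_cast card_le_card hmono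
    _ ≤ (⌊x⌋₊ : ℝ) ^ (1 - 1 / log y') * (y' : ℝ) ^ 24 :=
        card_smoothNumbersUpTo_le (le_max_right _ _) _
    _ ≤ x ^ (1 - 1 / log y') * (y' : ℝ) ^ 24 := by
        have hlog : 2 ≤ log (y' : ℝ) := two_le_log_of_eight_le (by exact_mod_cast le_max_right _ _)
        have hinv_log : 1 / log (y' : ℝ) ≤ 1 := by rw [div_le_one (by linarith)]; linarith
        gcongr
        exact Nat.floor_le hx.le
    _ ≤ x / log x ^ A := rpow_one_sub_inv_log_mul_pow_le hx hy'1 hA (by positivity)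
        ((log_le_log (by positivity) hy').trans_eq (log_rpow (by linarith) _)) hbigx

lemma natCeil_rpow_le_rpow_add_one {t c : ℝ} (ht : 2 ≤ t) (hc : 0 ≤ c) :
    (⌈t ^ c⌉₊ : ℝ) ≤ t ^ (c + 1) := by
  have h1 : 1 ≤ t ^ c := one_le_rpow (by linarith) hc
  calc (⌈t ^ c⌉₊ : ℝ) ≤ t ^ c + 1 := (Nat.ceil_lt_add_one (by linarith)).le
    _ ≤ t ^ c * t := by nlinarith
    _ = t ^ (c + 1) := (rpow_add_one (by linarith) c).symm

lemma isBigO_natFloor_div {A : ℝ} {g : ℝ → ℝ} (hg : ∀ᶠ x in atTop, log x ^ A ≤ g x) :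
    (fun x => (⌊x⌋₊ : ℝ) / g x) =O[atTop] fun x => x / log x ^ A := by
  refine .of_norm_eventuallyLE ?_
  filter_upwards [hg, eventually_gt_atTop 1] with x hgx hx
  have hLA : 0 < log x ^ A := rpow_pos_of_pos (log_pos hx) A
  rw [norm_of_nonneg (div_nonneg (Nat.cast_nonneg _) (hLA.le.trans hgx))]
  exact div_le_div₀ (by linarith) (Nat.floor_le (by linarith)) hLA hgx

lemma isBigO_card_filter_exists_sq_dvd {A : ℝ} {T : ℝ → ℕ}
    (hT : ∀ᶠ x in atTop, log x ^ A ≤ T x) :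
    (fun x => (#{n ∈ Ioc 0 ⌊x⌋₊ | ∃ q ∈ Ioc (T x) ⌊x⌋₊, q ^ 2 ∣ n} : ℝ))
      =O[atTop] fun x => x / log x ^ A := by
  have hT_succ : ∀ᶠ x in atTop, log x ^ A ≤ T x + 1 := hT.mono fun x hx => by linarith
  refine (IsBigO.of_norm_eventuallyLE (.of_forall fun x => ?_)).trans
    ((isBigO_natFloor_div hT_succ).const_mul_left 2)
  beta_reduce
  rw [Real.norm_natCast, ← mul_div_assoc]
  exact card_filter_exists_sq_dvd_le _ _

/-- For `α > 0` and any `A > 0`, the contribution of non-squarefree integers to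
`Σ_{1 < n ≤ x} (p(n)/P(n))^α` is `O(x/(log x)^A)`. -/
theorem non_squarefree_ratio_sum_negligible
    (α : ℝ) (hα : 0 < α) (A : ℝ) (hA : 0 < A) :
    (fun x : ℝ =>
        ∑ n ∈ (Finset.Icc 2 ⌊x⌋₊).filter (fun n => ¬Squarefree n),
          ((n.minFac : ℝ) / ((n.primeFactors.sup id : ℕ) : ℝ)) ^ α)
      =O[atTop] (fun x : ℝ => x / Real.log x ^ A) := by
  set T : ℝ → ℕ := fun x => ⌈log x ^ A⌉₊
  set S : ℝ → ℕ := fun x => ⌈log x ^ (A / α)⌉₊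
  have hS : ∀ᶠ x in atTop, log x ^ A ≤ (S x : ℝ) ^ α := by
    filter_upwards [eventually_gt_atTop 1] with x hx
    calc log x ^ A = (log x ^ (A / α)) ^ α := by
          rw [← rpow_mul (log_nonneg hx.le), div_mul_cancel₀ A hα.ne']
      _ ≤ (S x : ℝ) ^ α := rpow_le_rpow (rpow_nonneg (log_nonneg hx.le) _) (Nat.le_ceil _) hα.le
  have hTS : ∀ᶠ x in atTop, ((T x * S x : ℕ) : ℝ) ≤ log x ^ (A + 1 + (A / α + 1)) := by
    filter_upwards [tendsto_log_atTop.eventually_ge_atTop 2] with x hx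
    rw [rpow_add (by linarith), Nat.cast_mul]
    exact mul_le_mul (natCeil_rpow_le_rpow_add_one hx hA.le)
      (natCeil_rpow_le_rpow_add_one hx (by positivity)) (by positivity) (by positivity)
  have hsum : ∀ᶠ x in atTop, ‖∑ n ∈ (Finset.Icc 2 ⌊x⌋₊).filter (fun n => ¬Squarefree n),
        ((n.minFac : ℝ) / ((n.primeFactors.sup id : ℕ) : ℝ)) ^ α‖
      ≤ #{n ∈ Ioc 0 ⌊x⌋₊ | ∃ q ∈ Ioc (T x) ⌊x⌋₊, q ^ 2 ∣ n}
        + #(Nat.smoothNumbersUpTo ⌊x⌋₊ (T x * S x)) + ⌊x⌋₊ / (S x : ℝ) ^ α := by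
    filter_upwards [eventually_gt_atTop 1] with x hx
    rw [norm_of_nonneg (sum_nonneg fun n _ => by positivity)]
    exact sum_nonsquarefree_ratio_rpow_le hα.le _ _ _
      (Nat.ceil_pos.mpr (rpow_pos_of_pos (log_pos hx) _))
  exact (IsBigO.of_norm_eventuallyLE hsum).trans
    (((isBigO_card_filter_exists_sq_dvd (.of_forall fun x => Nat.le_ceil _)).add
      (isBigO_card_smoothNumbersUpTo hA.le hTS)).add (isBigO_natFloor_div hS))
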